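/- Conjugation of the connection Laplacian by an exponential with null phase: let ρ : Ω → ℂ be smooth with Σ_{i,j} g^{ij} (∂_i ρ)(∂_j ρ) = 0 pointwise on Ω (complex-bilinear null condition), and let h > 0. Then for every smooth a : Ω → ℂ^r one has, pointwise on Ω, e^{ρ/h}·h²·ℒ_{g,A,Q}( e^{−ρ/h} a ) = h²·ℒ_{g,A,Q} a − h·[ (−Δ_g ρ)·a − 2 Σ_{i,j} g^{ij} A_i (∂_j ρ) a − 2 Σ_{i,j} g^{ij} (∂_i ρ)(∂_j a) ]. -/

import Mathlib

open MeasureTheory Matrix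

attribute [local instance] Matrix.normedAddCommGroup Matrix.normedSpace

noncomputable section

/-- Partial derivative in the `i`-th coordinate direction. -/
def pd {n : ℕ} {E : Type*} [NormedAddCommGroup E] [NormedSpace ℝ E]
    (i : Fin n) (f : (Fin n → ℝ) → E) (x : Fin n → ℝ) : E :=
  fderiv ℝ f x (Pi.single i 1)

section helpers
variable {n : ℕ} {E : Type*} [NormedAddCommGroup E] [NormedSpace ℝ E]
  {f g : (Fin n → ℝ) → E} {x : Fin n → ℝ} {i : Fin n}

theorem pd_congr (h : f =ᶠ[nhds x] g) (i : Fin n) : pd i f x = pd i g x := by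
  unfold pd; rw [h.fderiv_eq]

theorem pd_add (hf : DifferentiableAt ℝ f x) (hg : DifferentiableAt ℝ g x) :
    pd i (fun y => f y + g y) x = pd i f x + pd i g x := by
  unfold pd; rw [fderiv_fun_add hf hg]; rfl

theorem pd_smul {𝕜' : Type*} [NontriviallyNormedField 𝕜'] [NormedAlgebra ℝ 𝕜']
    [NormedSpace 𝕜' E] [IsScalarTower ℝ 𝕜' E] {c : (Fin n → ℝ) → 𝕜'}
    (hc : DifferentiableAt ℝ c x) (hf : DifferentiableAt ℝ f x) :
    pd i (fun y => c y • f y) x = c x • pd i f x + pd i c x • f x := by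
  unfold pd; rw [fderiv_fun_smul hc hf]; simp

theorem pd_const_smul {𝕜' : Type*} [NontriviallyNormedField 𝕜'] [NormedAlgebra ℝ 𝕜']
    [NormedSpace 𝕜' E] [IsScalarTower ℝ 𝕜' E]
    (hf : DifferentiableAt ℝ f x) (c : 𝕜') :
    pd i (fun y => c • f y) x = c • pd i f x := by
  unfold pd; rw [fderiv_fun_const_smul hf c]; rfl

theorem pd_cexp {f : (Fin n → ℝ) → ℂ} (hf : DifferentiableAt ℝ f x) (i : Fin n) :
    pd i (fun y => Complex.exp (f y)) x = Complex.exp (f x) * pd i f x := by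
  have h1 := ((Complex.hasDerivAt_exp (f x)).hasFDerivAt.restrictScalars ℝ).comp x hf.hasFDerivAt
  unfold pd
  rw [show (fun y => Complex.exp (f y)) = Complex.exp ∘ f from rfl, h1.fderiv]
  simp [mul_comm]

theorem contDiffAt_pd {f : (Fin n → ℝ) → E} (hf : ContDiffAt ℝ (⊤ : ℕ∞) f x) (j : Fin n) :
    ContDiffAt ℝ 2 (fun y => pd j f y) x :=
  (hf.fderiv_right (by exact WithTop.coe_le_coe.2 le_top)).clm_apply contDiffAt_const

def entryCLM {p q : ℕ} {𝕜 : Type*} [NontriviallyNormedField 𝕜] [NormedAlgebra ℝ 𝕜]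
    (i : Fin p) (j : Fin q) : Matrix (Fin p) (Fin q) 𝕜 →L[ℝ] 𝕜 :=
  LinearMap.mkContinuous
    { toFun := fun M => M i j, map_add' := fun _ _ => rfl, map_smul' := fun _ _ => rfl } 1
    (fun M => by rw [one_mul]; exact M.norm_entry_le_entrywise_sup_norm)

theorem contDiffAt_entry {n p q : ℕ} {𝕜 : Type*} [NontriviallyNormedField 𝕜] [NormedAlgebra ℝ 𝕜]
    {f : (Fin n → ℝ) → Matrix (Fin p) (Fin q) 𝕜} {x : Fin n → ℝ} {m : WithTop ℕ∞}
    (hf : ContDiffAt ℝ m f x) (i : Fin p) (j : Fin q) :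
    ContDiffAt ℝ m (fun y => f y i j) x := by
  have := ((entryCLM (𝕜 := 𝕜) i j).contDiff.contDiffAt (x := f x)).comp x hf
  exact this

theorem differentiableAt_entry {n p q : ℕ} {𝕜 : Type*} [NontriviallyNormedField 𝕜]
    [NormedAlgebra ℝ 𝕜] {f : (Fin n → ℝ) → Matrix (Fin p) (Fin q) 𝕜} {x : Fin n → ℝ}
    (hf : DifferentiableAt ℝ f x) (i : Fin p) (j : Fin q) :
    DifferentiableAt ℝ (fun y => f y i j) x := by
  have := ((entryCLM (𝕜 := 𝕜) i j).differentiable.differentiableAt (x := f x)).comp x hf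
  exact this

theorem differentiableAt_mulVec {n p : ℕ} {M : (Fin n → ℝ) → Matrix (Fin p) (Fin p) ℂ}
    {v : (Fin n → ℝ) → Fin p → ℂ} {x : Fin n → ℝ}
    (hM : DifferentiableAt ℝ M x) (hv : DifferentiableAt ℝ v x) :
    DifferentiableAt ℝ (fun y => (M y).mulVec (v y)) x := by
  rw [differentiableAt_pi]
  intro k
  simp only [Matrix.mulVec, dotProduct]
  apply DifferentiableAt.fun_sum
  intro l _
  exact (differentiableAt_entry hM k l).mul ((differentiableAt_pi.1 hv) l)


theorem contDiffAt_det' {n p : ℕ} {f : (Fin n → ℝ) → Matrix (Fin p) (Fin p) ℝ}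
    {x : Fin n → ℝ} {m : WithTop ℕ∞}
    (hf : ∀ i j, ContDiffAt ℝ m (fun y => f y i j) x) :
    ContDiffAt ℝ m (fun y => (f y).det) x := by
  simp only [Matrix.det_apply']
  exact ContDiffAt.sum fun σ _ =>
    (contDiffAt_const.mul (contDiffAt_prod fun i _ => hf (σ i) i))

theorem contDiffAt_inv_entry {n p : ℕ} {f : (Fin n → ℝ) → Matrix (Fin p) (Fin p) ℝ}
    {x : Fin n → ℝ} {m : WithTop ℕ∞}
    (hf : ∀ i j, ContDiffAt ℝ m (fun y => f y i j) x) (hdet : (f x).det ≠ 0)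
    (i j : Fin p) : ContDiffAt ℝ m (fun y => (f y)⁻¹ i j) x := by
  have hadj : ContDiffAt ℝ m (fun y => (f y).adjugate i j) x := by
    simp only [Matrix.adjugate_apply]
    refine contDiffAt_det' fun k l => ?_
    simp only [Matrix.updateRow_apply]
    by_cases hk : k = j <;> simp [hk] <;> [exact contDiffAt_const; exact hf k l]
  have : (fun y => (f y)⁻¹ i j) = fun y => ((f y).det)⁻¹ * (f y).adjugate i j := by
    funext y
    rw [Matrix.inv_def, Matrix.smul_apply, Ring.inverse_eq_inv', smul_eq_mul]
  rw [this]
  exact ((contDiffAt_det' hf).inv hdet).mul hadj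

end helpers

theorem conj_term {n r : ℕ} {Ω : Set (Fin n → ℝ)} (hΩ : IsOpen Ω) {x : Fin n → ℝ} (hx : x ∈ Ω)
    {c : (Fin n → ℝ) → ℝ} (hc : ContDiffOn ℝ (⊤ : ℕ∞) c Ω)
    {ρ : (Fin n → ℝ) → ℂ} (hρ : ContDiffOn ℝ (⊤ : ℕ∞) ρ Ω)
    {a : (Fin n → ℝ) → Fin r → ℂ} (ha : ContDiffOn ℝ (⊤ : ℕ∞) a Ω)
    {Ai Aj : (Fin n → ℝ) → Matrix (Fin r) (Fin r) ℂ}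
    (hAj : ContDiffOn ℝ (⊤ : ℕ∞) Aj Ω) (β : ℂ) (i j : Fin n) :
    pd i (fun y => c y • (pd j (fun z => Complex.exp (β * ρ z) • a z) y
        + (Aj y).mulVec (Complex.exp (β * ρ y) • a y))) x
      + (Ai x).mulVec (c x • (pd j (fun z => Complex.exp (β * ρ z) • a z) x
        + (Aj x).mulVec (Complex.exp (β * ρ x) • a x)))
    = Complex.exp (β * ρ x) • (
        (pd i (fun y => c y • (pd j a y + (Aj y).mulVec (a y))) x
          + (Ai x).mulVec (c x • (pd j a x + (Aj x).mulVec (a x))))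
      + β • ((pd i ρ x) • (c x • (pd j a x + (Aj x).mulVec (a x)))
            + (c x • pd j ρ x) • pd i a x
            + (pd i (fun y => c y • pd j ρ y) x) • a x
            + (c x • pd j ρ x) • (Ai x).mulVec (a x))
      + (β * β) • ((pd i ρ x * (c x • pd j ρ x)) • a x)) := by
  have hΩx := hΩ.mem_nhds hx
  have hρd : ∀ y ∈ Ω, DifferentiableAt ℝ ρ y := fun y hy =>
    (hρ.contDiffAt (hΩ.mem_nhds hy)).differentiableAt (by simp)
  have had : ∀ y ∈ Ω, DifferentiableAt ℝ a y := fun y hy =>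
    (ha.contDiffAt (hΩ.mem_nhds hy)).differentiableAt (by simp)
  have hEd : ∀ y ∈ Ω, DifferentiableAt ℝ (fun z => Complex.exp (β * ρ z)) y := fun y hy =>
    ((hρd y hy).const_mul β).cexp
  have hEpd : ∀ y ∈ Ω, ∀ i' : Fin n, pd i' (fun z => Complex.exp (β * ρ z)) y
      = Complex.exp (β * ρ y) * (β * pd i' ρ y) := by
    intro y hy i'
    rw [pd_cexp ((hρd y hy).const_mul β)]
    congr 1
    exact pd_const_smul (hρd y hy) β
  have hupd : ∀ y ∈ Ω, ∀ j' : Fin n, pd j' (fun z => Complex.exp (β * ρ z) • a z) y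
      = Complex.exp (β * ρ y) • pd j' a y + (Complex.exp (β * ρ y) * (β * pd j' ρ y)) • a y := by
    intro y hy j'
    rw [pd_smul (hEd y hy) (had y hy), hEpd y hy j']
  -- Eventual equality
  have Feq : (fun y => c y • (pd j (fun z => Complex.exp (β * ρ z) • a z) y
        + (Aj y).mulVec (Complex.exp (β * ρ y) • a y)))
      =ᶠ[nhds x] (fun y => Complex.exp (β * ρ y) •
        (c y • (pd j a y + (Aj y).mulVec (a y)) + β • ((c y • pd j ρ y) • a y))) := by
    filter_upwards [hΩx] with y hy
    rw [hupd y hy j, Matrix.mulVec_smul]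
    funext k
    simp only [Pi.add_apply, Pi.smul_apply, smul_eq_mul, Complex.real_smul]
    ring
  -- differentiability of the pieces at x
  have hcd : DifferentiableAt ℝ c x := (hc.contDiffAt hΩx).differentiableAt (by simp)
  have hpda : DifferentiableAt ℝ (fun y => pd j a y) x :=
    (contDiffAt_pd (ha.contDiffAt hΩx) j).differentiableAt (by norm_num)
  have hψ : DifferentiableAt ℝ (fun y => pd j ρ y) x :=
    (contDiffAt_pd (hρ.contDiffAt hΩx) j).differentiableAt (by norm_num)
  have hAjd : DifferentiableAt ℝ Aj x := (hAj.contDiffAt hΩx).differentiableAt (by simp)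
  have hAv : DifferentiableAt ℝ (fun y => (Aj y).mulVec (a y)) x :=
    differentiableAt_mulVec hAjd (had x hx)
  have hG1 : DifferentiableAt ℝ (fun y => c y • (pd j a y + (Aj y).mulVec (a y))) x :=
    hcd.smul (hpda.add hAv)
  have hcψ : DifferentiableAt ℝ (fun y => c y • pd j ρ y) x := hcd.smul hψ
  have hG2' : DifferentiableAt ℝ (fun y => (c y • pd j ρ y) • a y) x := hcψ.smul (had x hx)
  have hG2 : DifferentiableAt ℝ (fun y => β • ((c y • pd j ρ y) • a y)) x := hG2'.const_smul β
  rw [pd_congr Feq i, pd_smul (hEd x hx) (hG1.fun_add hG2), hEpd x hx i,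
    pd_add hG1 hG2, pd_const_smul hG2' β, pd_smul hcψ (had x hx),
    hupd x hx j, Matrix.mulVec_smul]
  simp only [Matrix.mulVec_add, Matrix.mulVec_smul]
  funext k
  simp only [Pi.add_apply, Pi.smul_apply, smul_eq_mul, Complex.real_smul]
  ring

/-- The Laplace–Beltrami operator in local coordinates, acting on complex
valued functions: `Δ_g f = |g|^{−1/2} Σ_{i,j} ∂_i(|g|^{1/2} g^{ij} ∂_j f)`. -/
def LapBC {n : ℕ} (g : (Fin n → ℝ) → Matrix (Fin n) (Fin n) ℝ)
    (f : (Fin n → ℝ) → ℂ) (x : Fin n → ℝ) : ℂ :=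
  (Real.sqrt (g x).det)⁻¹ •
    ∑ i, ∑ j, pd i (fun y => (Real.sqrt (g y).det * (g y)⁻¹ i j) • pd j f y) x

/-- The connection Laplacian in local coordinates:
`ℒ_{g,A,Q} u = −|g|^{−1/2} Σ_{i,j} (∂_i + A_i)(|g|^{1/2} g^{ij} (∂_j + A_j)u) + Qu`. -/
def Lap {n r : ℕ} (g : (Fin n → ℝ) → Matrix (Fin n) (Fin n) ℝ)
    (A : Fin n → (Fin n → ℝ) → Matrix (Fin r) (Fin r) ℂ)
    (Q : (Fin n → ℝ) → Matrix (Fin r) (Fin r) ℂ)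
    (u : (Fin n → ℝ) → (Fin r → ℂ)) (x : Fin n → ℝ) : Fin r → ℂ :=
  (-(Real.sqrt (g x).det)⁻¹) •
    ∑ i, ∑ j,
      (pd i (fun y => (Real.sqrt (g y).det * (g y)⁻¹ i j) •
          (pd j u y + (A j y).mulVec (u y))) x
        + (A i x).mulVec ((Real.sqrt (g x).det * (g x)⁻¹ i j) •
          (pd j u x + (A j x).mulVec (u x))))
  + (Q x).mulVec (u x)

/-- **Conjugation of the connection Laplacian by an exponential with null phase:**
for `ρ` with `Σ g^{ij} ∂_iρ ∂_jρ = 0` and `h > 0`,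
`e^{ρ/h} h² ℒ_{g,A,Q}(e^{−ρ/h} a)
  = h² ℒ_{g,A,Q} a − h [(−Δ_g ρ)a − 2 Σ g^{ij} A_i (∂_jρ) a − 2 Σ g^{ij} (∂_iρ)(∂_j a)]`. -/
theorem conjugated_connection_laplacian
    {n r : ℕ} (hn : 1 ≤ n) (hr : 1 ≤ r)
    (Ω : Set (Fin n → ℝ)) (hΩ : IsOpen Ω)
    (g : (Fin n → ℝ) → Matrix (Fin n) (Fin n) ℝ)
    (hg : ContDiffOn ℝ (⊤ : ℕ∞) g Ω)
    (hgpos : ∀ x ∈ Ω, (g x).PosDef)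
    (A : Fin n → (Fin n → ℝ) → Matrix (Fin r) (Fin r) ℂ)
    (hA : ∀ i, ContDiffOn ℝ (⊤ : ℕ∞) (A i) Ω)
    (Q : (Fin n → ℝ) → Matrix (Fin r) (Fin r) ℂ)
    (hQ : ContDiffOn ℝ (⊤ : ℕ∞) Q Ω)
    (ρ : (Fin n → ℝ) → ℂ)
    (hρ : ContDiffOn ℝ (⊤ : ℕ∞) ρ Ω)
    (hnull : ∀ x ∈ Ω, ∑ i, ∑ j, ((g x)⁻¹ i j) • (pd i ρ x * pd j ρ x) = 0)
    (h : ℝ) (hh : 0 < h)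
    (a : (Fin n → ℝ) → (Fin r → ℂ))
    (ha : ContDiffOn ℝ (⊤ : ℕ∞) a Ω) :
    ∀ x ∈ Ω,
      Complex.exp (ρ x / (h : ℂ)) •
        ((h ^ 2) • Lap g A Q (fun y => Complex.exp (-ρ y / (h : ℂ)) • a y) x)
      = (h ^ 2) • Lap g A Q a x
        - h • ((-(LapBC g ρ x)) • a x
            - (2:ℝ) • ∑ i, ∑ j, ((g x)⁻¹ i j) • ((pd j ρ x) • (A i x).mulVec (a x))
            - (2:ℝ) • ∑ i, ∑ j, ((g x)⁻¹ i j) • ((pd i ρ x) • pd j a x)) := by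
  intro x hx
  have hΩx := hΩ.mem_nhds hx
  set β : ℂ := -(1/(h:ℂ)) with hβ
  have hu : (fun y => Complex.exp (-ρ y / (h:ℂ)) • a y)
      = (fun y => Complex.exp (β * ρ y) • a y) := by
    funext y; congr 2; rw [hβ]; ring
  rw [hu]
  have hdetpos : ∀ y ∈ Ω, 0 < (g y).det := fun y hy => (hgpos y hy).det_pos
  have hcOn : ∀ i j : Fin n,
      ContDiffOn ℝ (⊤ : ℕ∞) (fun y => Real.sqrt (g y).det * (g y)⁻¹ i j) Ω := by
    intro i j y hy
    have hgy : ContDiffAt ℝ (⊤ : ℕ∞) g y := hg.contDiffAt (hΩ.mem_nhds hy)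
    have hent := fun k l => contDiffAt_entry hgy k l
    have hdet := contDiffAt_det' hent
    have hne : (g y).det ≠ 0 := (hdetpos y hy).ne'
    exact ((hdet.sqrt hne).mul (contDiffAt_inv_entry hent hne i j)).contDiffWithinAt
  have key := fun i j : Fin n => conj_term (Ai := A i) hΩ hx (hcOn i j) hρ ha (hA j) β i j
  -- abbreviations (purely textual below):
  -- s := Real.sqrt (g x).det, m i j := (g x)⁻¹ i j, ψ i := pd i ρ x
  have hs : Real.sqrt (g x).det ≠ 0 := by
    have := Real.sqrt_pos.2 (hdetpos x hx)
    exact this.ne'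
  have hh' : (h:ℂ) ≠ 0 := by exact_mod_cast hh.ne'
  have hsym : ∀ i j : Fin n, (g x)⁻¹ j i = (g x)⁻¹ i j := by
    intro i j
    have hH : ((g x)⁻¹).IsHermitian := (hgpos x hx).1.inv
    simpa using hH.apply i j
  -- the factored form of the conjugated Laplacian
  have hsum' : (∑ i, ∑ j,
        (pd i (fun y => (Real.sqrt (g y).det * (g y)⁻¹ i j) •
            (pd j (fun z => Complex.exp (β * ρ z) • a z) y
              + (A j y).mulVec (Complex.exp (β * ρ y) • a y))) x
          + (A i x).mulVec ((Real.sqrt (g x).det * (g x)⁻¹ i j) •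
            (pd j (fun z => Complex.exp (β * ρ z) • a z) x
              + (A j x).mulVec (Complex.exp (β * ρ x) • a x)))))
      = Complex.exp (β * ρ x) • ∑ i, ∑ j,
        ((pd i (fun y => (Real.sqrt (g y).det * (g y)⁻¹ i j) • (pd j a y + (A j y).mulVec (a y))) x
            + (A i x).mulVec ((Real.sqrt (g x).det * (g x)⁻¹ i j) • (pd j a x + (A j x).mulVec (a x))))
          + β • ((pd i ρ x) • ((Real.sqrt (g x).det * (g x)⁻¹ i j) • (pd j a x + (A j x).mulVec (a x)))
                + ((Real.sqrt (g x).det * (g x)⁻¹ i j) • pd j ρ x) • pd i a x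
                + (pd i (fun y => (Real.sqrt (g y).det * (g y)⁻¹ i j) • pd j ρ y) x) • a x
                + ((Real.sqrt (g x).det * (g x)⁻¹ i j) • pd j ρ x) • (A i x).mulVec (a x))
          + (β * β) • ((pd i ρ x * ((Real.sqrt (g x).det * (g x)⁻¹ i j) • pd j ρ x)) • a x)) := by
    rw [Finset.smul_sum]
    refine Finset.sum_congr rfl fun i _ => ?_
    rw [Finset.smul_sum]
    exact Finset.sum_congr rfl fun j _ => key i j
  have hLapu : Lap g A Q (fun y => Complex.exp (β * ρ y) • a y) x
      = Complex.exp (β * ρ x) •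
        ((-(Real.sqrt (g x).det)⁻¹) • (∑ i, ∑ j, ((pd i (fun y => (Real.sqrt (g y).det * (g y)⁻¹ i j) • (pd j a y + (A j y).mulVec (a y))) x
            + (A i x).mulVec ((Real.sqrt (g x).det * (g x)⁻¹ i j) • (pd j a x + (A j x).mulVec (a x)))) + β • ((pd i ρ x) • ((Real.sqrt (g x).det * (g x)⁻¹ i j) • (pd j a x + (A j x).mulVec (a x)))
                + ((Real.sqrt (g x).det * (g x)⁻¹ i j) • pd j ρ x) • pd i a x
                + (pd i (fun y => (Real.sqrt (g y).det * (g y)⁻¹ i j) • pd j ρ y) x) • a x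
                + ((Real.sqrt (g x).det * (g x)⁻¹ i j) • pd j ρ x) • (A i x).mulVec (a x)) + (β * β) • ((pd i ρ x * ((Real.sqrt (g x).det * (g x)⁻¹ i j) • pd j ρ x)) • a x)))
        + (Q x).mulVec (a x)) := by
    show (-(Real.sqrt (g x).det)⁻¹) • (∑ i, ∑ j,
        (pd i (fun y => (Real.sqrt (g y).det * (g y)⁻¹ i j) •
            (pd j (fun z => Complex.exp (β * ρ z) • a z) y
              + (A j y).mulVec (Complex.exp (β * ρ y) • a y))) x
          + (A i x).mulVec ((Real.sqrt (g x).det * (g x)⁻¹ i j) •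
            (pd j (fun z => Complex.exp (β * ρ z) • a z) x
              + (A j x).mulVec (Complex.exp (β * ρ x) • a x)))))
      + (Q x).mulVec (Complex.exp (β * ρ x) • a x) = _
    rw [hsum', Matrix.mulVec_smul, smul_comm (-(Real.sqrt (g x).det)⁻¹) (Complex.exp (β * ρ x)),
      ← smul_add]
  have hEx1 : Complex.exp (ρ x / (h:ℂ)) * Complex.exp (β * ρ x) = 1 := by
    rw [← Complex.exp_add]
    have : ρ x / (h:ℂ) + β * ρ x = 0 := by rw [hβ]; ring
    rw [this, Complex.exp_zero]
  have collapse : ∀ v : Fin r → ℂ,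
      Complex.exp (ρ x / (h:ℂ)) • ((h^2 : ℝ) • (Complex.exp (β * ρ x) • v)) = (h^2 : ℝ) • v := by
    intro v
    rw [smul_comm (Complex.exp (ρ x / (h:ℂ))) ((h^2 : ℝ)), smul_smul, hEx1, one_smul]
  rw [hLapu, collapse]
  have hS0 : (∑ i, ∑ j, ((pd i ρ x * ((Real.sqrt (g x).det * (g x)⁻¹ i j) • pd j ρ x)) • a x)) = (0 : Fin r → ℂ) := by
    have h1 : ∀ i j : Fin n, (pd i ρ x * ((Real.sqrt (g x).det * (g x)⁻¹ i j) • pd j ρ x)) • a x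
        = ((Real.sqrt (g x).det) • ((g x)⁻¹ i j • (pd i ρ x * pd j ρ x))) • a x := by
      intro i j
      congr 1
      simp only [Complex.real_smul, Complex.ofReal_mul]
      ring
    calc (∑ i, ∑ j, (pd i ρ x * ((Real.sqrt (g x).det * (g x)⁻¹ i j) • pd j ρ x)) • a x)
        = ∑ i, ∑ j, ((Real.sqrt (g x).det) • ((g x)⁻¹ i j • (pd i ρ x * pd j ρ x))) • a x :=
          Finset.sum_congr rfl fun i _ => Finset.sum_congr rfl fun j _ => h1 i j
      _ = ((Real.sqrt (g x).det) • ∑ i, ∑ j, ((g x)⁻¹ i j • (pd i ρ x * pd j ρ x))) • a x := by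
          simp only [← Finset.sum_smul, ← Finset.smul_sum]
      _ = 0 := by rw [hnull x hx, smul_zero, zero_smul]
  have hsplit : (∑ i, ∑ j, ((pd i (fun y => (Real.sqrt (g y).det * (g y)⁻¹ i j) • (pd j a y + (A j y).mulVec (a y))) x
            + (A i x).mulVec ((Real.sqrt (g x).det * (g x)⁻¹ i j) • (pd j a x + (A j x).mulVec (a x)))) + β • ((pd i ρ x) • ((Real.sqrt (g x).det * (g x)⁻¹ i j) • (pd j a x + (A j x).mulVec (a x)))
                + ((Real.sqrt (g x).det * (g x)⁻¹ i j) • pd j ρ x) • pd i a x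
                + (pd i (fun y => (Real.sqrt (g y).det * (g y)⁻¹ i j) • pd j ρ y) x) • a x
                + ((Real.sqrt (g x).det * (g x)⁻¹ i j) • pd j ρ x) • (A i x).mulVec (a x)) + (β * β) • ((pd i ρ x * ((Real.sqrt (g x).det * (g x)⁻¹ i j) • pd j ρ x)) • a x)))
      = (∑ i, ∑ j, (pd i (fun y => (Real.sqrt (g y).det * (g y)⁻¹ i j) • (pd j a y + (A j y).mulVec (a y))) x
            + (A i x).mulVec ((Real.sqrt (g x).det * (g x)⁻¹ i j) • (pd j a x + (A j x).mulVec (a x))))) + β • (∑ i, ∑ j, ((pd i ρ x) • ((Real.sqrt (g x).det * (g x)⁻¹ i j) • (pd j a x + (A j x).mulVec (a x)))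
                + ((Real.sqrt (g x).det * (g x)⁻¹ i j) • pd j ρ x) • pd i a x
                + (pd i (fun y => (Real.sqrt (g y).det * (g y)⁻¹ i j) • pd j ρ y) x) • a x
                + ((Real.sqrt (g x).det * (g x)⁻¹ i j) • pd j ρ x) • (A i x).mulVec (a x))) + (β * β) • (∑ i, ∑ j, ((pd i ρ x * ((Real.sqrt (g x).det * (g x)⁻¹ i j) • pd j ρ x)) • a x)) := by
    simp only [smul_add, Finset.smul_sum, Finset.sum_add_distrib]
  rw [hsplit, hS0, smul_zero, add_zero]
  have hfin : ∀ v w : Fin r → ℂ,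
      (h^2 : ℝ) • ((-(Real.sqrt (g x).det)⁻¹) • (v + β • w) + (Q x).mulVec (a x))
      = (h^2 : ℝ) • ((-(Real.sqrt (g x).det)⁻¹) • v + (Q x).mulVec (a x))
        + (h : ℝ) • (((Real.sqrt (g x).det)⁻¹ : ℝ) • w) := by
    intro v w
    funext k
    simp only [Pi.add_apply, Pi.smul_apply, smul_eq_mul, Complex.real_smul, Complex.ofReal_pow,
      Complex.ofReal_neg, Complex.ofReal_inv, hβ]
    have hcan : ((h:ℂ))^2 * (1/(h:ℂ)) = (h:ℂ) := by field_simp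
    linear_combination ((Complex.ofReal (Real.sqrt (g x).det))⁻¹ * w k) * hcan
  rw [hfin]
  have hLapa : Lap g A Q a x
      = (-(Real.sqrt (g x).det)⁻¹) • (∑ i, ∑ j, (pd i (fun y => (Real.sqrt (g y).det * (g y)⁻¹ i j) • (pd j a y + (A j y).mulVec (a y))) x
            + (A i x).mulVec ((Real.sqrt (g x).det * (g x)⁻¹ i j) • (pd j a x + (A j x).mulVec (a x))))) + (Q x).mulVec (a x) := rfl
  rw [← hLapa]
  have hR : ∀ i j : Fin n, ((pd i ρ x) • ((Real.sqrt (g x).det * (g x)⁻¹ i j) • (pd j a x + (A j x).mulVec (a x)))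
                + ((Real.sqrt (g x).det * (g x)⁻¹ i j) • pd j ρ x) • pd i a x
                + (pd i (fun y => (Real.sqrt (g y).det * (g y)⁻¹ i j) • pd j ρ y) x) • a x
                + ((Real.sqrt (g x).det * (g x)⁻¹ i j) • pd j ρ x) • (A i x).mulVec (a x)) = Real.sqrt (g x).det •
      (((g x)⁻¹ i j • (pd i ρ x • pd j a x)) + ((g x)⁻¹ i j • (pd i ρ x • (A j x).mulVec (a x)))
        + ((g x)⁻¹ i j • (pd j ρ x • pd i a x)) + ((g x)⁻¹ i j • (pd j ρ x • (A i x).mulVec (a x))))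
      + (pd i (fun y => (Real.sqrt (g y).det * (g y)⁻¹ i j) • pd j ρ y) x) • a x := by
    intro i j
    funext k
    simp only [Pi.add_apply, Pi.smul_apply, smul_eq_mul, Complex.real_smul, Complex.ofReal_mul]
    ring
  have hswap1 : (∑ i, ∑ j, (g x)⁻¹ i j • (pd j ρ x • pd i a x))
      = ∑ i, ∑ j, (g x)⁻¹ i j • (pd i ρ x • pd j a x) := by
    rw [Finset.sum_comm]
    exact Finset.sum_congr rfl fun u _ => Finset.sum_congr rfl fun v _ => by rw [hsym u v]
  have hswap2 : (∑ i, ∑ j, (g x)⁻¹ i j • (pd i ρ x • (A j x).mulVec (a x)))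
      = ∑ i, ∑ j, (g x)⁻¹ i j • (pd j ρ x • (A i x).mulVec (a x)) := by
    rw [Finset.sum_comm]
    exact Finset.sum_congr rfl fun u _ => Finset.sum_congr rfl fun v _ => by rw [hsym u v]
  have e1 : (∑ i, ∑ j, ((pd i ρ x) • ((Real.sqrt (g x).det * (g x)⁻¹ i j) • (pd j a x + (A j x).mulVec (a x)))
                + ((Real.sqrt (g x).det * (g x)⁻¹ i j) • pd j ρ x) • pd i a x
                + (pd i (fun y => (Real.sqrt (g y).det * (g y)⁻¹ i j) • pd j ρ y) x) • a x
                + ((Real.sqrt (g x).det * (g x)⁻¹ i j) • pd j ρ x) • (A i x).mulVec (a x))) = Real.sqrt (g x).det •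
      ((∑ i, ∑ j, (g x)⁻¹ i j • (pd i ρ x • pd j a x))
        + (∑ i, ∑ j, (g x)⁻¹ i j • (pd i ρ x • (A j x).mulVec (a x)))
        + (∑ i, ∑ j, (g x)⁻¹ i j • (pd j ρ x • pd i a x))
        + (∑ i, ∑ j, (g x)⁻¹ i j • (pd j ρ x • (A i x).mulVec (a x))))
      + (∑ i, ∑ j, pd i (fun y => (Real.sqrt (g y).det * (g y)⁻¹ i j) • pd j ρ y) x) • a x := by
    rw [Finset.sum_congr rfl fun i (_ : i ∈ Finset.univ) =>
      Finset.sum_congr rfl fun j (_ : j ∈ Finset.univ) => hR i j]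
    simp only [Finset.sum_add_distrib, ← Finset.smul_sum, ← Finset.sum_smul]
  have hLapBC : LapBC g ρ x = (Real.sqrt (g x).det)⁻¹ •
      ∑ i, ∑ j, pd i (fun y => (Real.sqrt (g y).det * (g y)⁻¹ i j) • pd j ρ y) x := rfl
  have claimR : ((Real.sqrt (g x).det)⁻¹ : ℝ) • (∑ i, ∑ j, ((pd i ρ x) • ((Real.sqrt (g x).det * (g x)⁻¹ i j) • (pd j a x + (A j x).mulVec (a x)))
                + ((Real.sqrt (g x).det * (g x)⁻¹ i j) • pd j ρ x) • pd i a x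
                + (pd i (fun y => (Real.sqrt (g y).det * (g y)⁻¹ i j) • pd j ρ y) x) • a x
                + ((Real.sqrt (g x).det * (g x)⁻¹ i j) • pd j ρ x) • (A i x).mulVec (a x)))
      = (LapBC g ρ x) • a x
        + (2:ℝ) • ∑ i, ∑ j, ((g x)⁻¹ i j) • ((pd j ρ x) • (A i x).mulVec (a x))
        + (2:ℝ) • ∑ i, ∑ j, ((g x)⁻¹ i j) • ((pd i ρ x) • pd j a x) := by
    rw [e1, hswap1, hswap2, smul_add, inv_smul_smul₀ hs, ← smul_assoc, ← hLapBC]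
    funext k
    simp only [Pi.add_apply, Pi.smul_apply, smul_eq_mul, Complex.real_smul, Complex.ofReal_ofNat]
    ring
  rw [claimR]
  funext k
  simp only [Pi.add_apply, Pi.sub_apply, Pi.smul_apply, Pi.neg_apply, smul_eq_mul,
    Complex.real_smul, Complex.ofReal_pow, Complex.ofReal_ofNat, neg_mul]
  ring
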